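/- Let λ₀ = 1, λⱼ = 2^{-2^j} for j ≥ 1, and for finitely supported 0-1 sequences α set x_α = Σ_{j≥1} αⱼ(1-λⱼ)λ₀···λ_{j-1}. There exists k > 0 such that for all 0-1 sequences α, α', β with x_α < x_β, one has |(x_α + x_β)/2 - x_{α'}| > k(x_β - x_α). -/
import Mathlib


open scoped Classical

/-- `λ₀ = 1`, `λⱼ = 2^{-2^j}` for `j ≥ 1`. -/
noncomputable def lamSeq (j : ℕ) : ℝ := if j = 0 then 1 else ((2 : ℝ) ^ (2 ^ j))⁻¹

/-- `λ₀ λ₁ ⋯ λ_{m-1}`. -/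
noncomputable def lamProd (m : ℕ) : ℝ := ∏ i ∈ Finset.range m, lamSeq i

/-- `x_α = Σ_{j ≥ 1} αⱼ (1-λⱼ) λ₀⋯λ_{j-1}`. -/
noncomputable def xPoint (α : ℕ → ℕ) : ℝ :=
  ∑' j : ℕ, if 1 ≤ j then (α j : ℝ) * (1 - lamSeq j) * lamProd j else 0

/-- A finitely supported `0`-`1` sequence (indexed by `j ≥ 1`). -/
def BinSeq (α : ℕ → ℕ) : Prop := (∀ j, α j ≤ 1) ∧ ∃ N, ∀ j, N ≤ j → α j = 0

noncomputable def aa (j : ℕ) : ℝ := 4 * ((2:ℝ) ^ (2^j))⁻¹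
noncomputable def ww (j : ℕ) : ℝ := (1 - lamSeq j) * lamProd j
noncomputable def FF (α : ℕ → ℕ) (j : ℕ) : ℝ := if 1 ≤ j then (α j : ℝ) * ww j else 0

lemma aa_pos (j : ℕ) : 0 < aa j := by
  unfold aa; positivity

lemma aa_succ (j : ℕ) : aa (j+1) = aa j * ((2:ℝ) ^ (2^j))⁻¹ := by
  unfold aa
  rw [pow_succ, mul_comm (2^j) 2, two_mul, pow_add, mul_inv]
  ring

lemma aa_mono {i k : ℕ} (h : i ≤ k) : aa k ≤ aa i := by
  unfold aa
  have h1 : (2:ℝ) ^ (2^i) ≤ (2:ℝ) ^ (2^k) :=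
    pow_le_pow_right₀ one_le_two (Nat.pow_le_pow_right (by norm_num) h)
  have h2 : (0:ℝ) < 2 ^ (2^i) := by positivity
  have := inv_anti₀ h2 h1
  linarith

lemma aa_le_one {j : ℕ} (h : 1 ≤ j) : aa j ≤ 1 := by
  have := aa_mono h
  have : aa 1 = 1 := by unfold aa; norm_num
  have h2 := aa_mono h
  rw [this] at h2; exact h2

lemma aa_quarter {j : ℕ} (h : 1 ≤ j) : 4 * aa (j+1) ≤ aa j := by
  have h1 : aa (j+1) = aa j * ((2:ℝ)^(2^j))⁻¹ := aa_succ j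
  have h2 : 4 * ((2:ℝ)^(2^j))⁻¹ = aa j := rfl
  have h3 := aa_le_one h
  have h4 := aa_pos j
  calc 4 * aa (j+1) = aa j * (4 * ((2:ℝ)^(2^j))⁻¹) := by rw [h1]; ring
    _ = aa j * aa j := by rw [h2]
    _ ≤ aa j * 1 := by nlinarith
    _ = aa j := mul_one _

lemma lamProd_eq {j : ℕ} (h : 1 ≤ j) : lamProd j = aa j := by
  induction j with
  | zero => omega
  | succ n ih =>
    rcases Nat.eq_or_lt_of_le h with h'|h'
    · have : n = 0 := by omega
      subst this
      unfold lamProd aa lamSeq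
      norm_num
    · have hn : 1 ≤ n := by omega
      unfold lamProd
      rw [Finset.prod_range_succ]
      have : lamSeq n = ((2:ℝ) ^ (2^n))⁻¹ := by unfold lamSeq; rw [if_neg (by omega)]
      rw [show (∏ i ∈ Finset.range n, lamSeq i) = lamProd n from rfl, ih hn, this, aa_succ]

lemma ww_eq {j : ℕ} (h : 1 ≤ j) : ww j = aa j - aa (j+1) := by
  unfold ww
  rw [lamProd_eq h]
  have : lamSeq j = ((2:ℝ) ^ (2^j))⁻¹ := by unfold lamSeq; rw [if_neg (by omega)]
  rw [this, aa_succ]; ring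

lemma ww_nonneg {j : ℕ} (h : 1 ≤ j) : 0 ≤ ww j := by
  rw [ww_eq h]
  have := aa_quarter h
  have := aa_pos (j+1)
  linarith

lemma xPoint_eq_tsum (α : ℕ → ℕ) : xPoint α = ∑' j, FF α j := by
  unfold xPoint FF ww
  exact tsum_congr fun j => by split <;> ring

lemma xPoint_eq_sum (α : ℕ → ℕ) {N : ℕ} (hN : ∀ j, N ≤ j → α j = 0) :
    xPoint α = ∑ j ∈ Finset.range N, FF α j := by
  rw [xPoint_eq_tsum]
  apply tsum_eq_sum
  intro j hj
  have : N ≤ j := by simpa using hj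
  unfold FF
  rw [hN j this]
  simp

lemma sum_split (f : ℕ → ℝ) {j N : ℕ} (h : j < N) :
    ∑ m ∈ Finset.range N, f m =
      (∑ m ∈ Finset.range j, f m) + f j + ∑ m ∈ Finset.Ico (j+1) N, f m := by
  rw [Finset.range_eq_Ico, ← Finset.sum_Ico_consecutive f (Nat.zero_le j) h.le,
      Finset.sum_eq_sum_Ico_succ_bot h, ← Finset.range_eq_Ico]
  ring

lemma sum_ww (j : ℕ) : ∀ N, j + 1 ≤ N →
    ∑ m ∈ Finset.Ico (j+1) N, ww m = aa (j+1) - aa N := by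
  intro N
  induction N with
  | zero => omega
  | succ n ih =>
    intro h
    rcases Nat.eq_or_lt_of_le h with h'|h'
    · rw [← h']; simp
    · have hn : j + 1 ≤ n := by omega
      rw [Finset.sum_Ico_succ_top hn, ih hn, ww_eq (by omega : 1 ≤ n)]
      ring

lemma tail_nonneg (α : ℕ → ℕ) (j N : ℕ) : 0 ≤ ∑ m ∈ Finset.Ico (j+1) N, FF α m := by
  apply Finset.sum_nonneg
  intro m hm
  have hm1 : 1 ≤ m := by have := Finset.mem_Ico.mp hm; omega
  unfold FF
  rw [if_pos hm1]
  exact mul_nonneg (Nat.cast_nonneg _) (ww_nonneg hm1)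

lemma tail_le (α : ℕ → ℕ) (hα : ∀ m, α m ≤ 1) {j N : ℕ} (h : j + 1 ≤ N) :
    ∑ m ∈ Finset.Ico (j+1) N, FF α m ≤ aa (j+1) - aa N := by
  rw [← sum_ww j N h]
  apply Finset.sum_le_sum
  intro m hm
  have hm1 : 1 ≤ m := by have := Finset.mem_Ico.mp hm; omega
  unfold FF
  rw [if_pos hm1]
  have : (α m : ℝ) ≤ 1 := by exact_mod_cast hα m
  nlinarith [ww_nonneg hm1]

lemma FF_zero {α : ℕ → ℕ} {j : ℕ} (h : α j = 0) : FF α j = 0 := by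
  unfold FF; rw [h]; simp

lemma FF_one {α : ℕ → ℕ} {j : ℕ} (h1 : 1 ≤ j) (h : α j = 1) : FF α j = ww j := by
  unfold FF; rw [if_pos h1, h]; simp

lemma FF_congr {α β : ℕ → ℕ} {m : ℕ} (h : 1 ≤ m → α m = β m) : FF α m = FF β m := by
  unfold FF
  by_cases h1 : 1 ≤ m
  · rw [if_pos h1, if_pos h1, h h1]
  · rw [if_neg h1, if_neg h1]

/-- Separation property: the midpoint of `[x_α, x_β]` stays at distance `> k(x_β - x_α)`
from every point `x_{α'}`. -/
theorem midpoint_separation :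
    ∃ k : ℝ, 0 < k ∧ ∀ α α' β : ℕ → ℕ, BinSeq α → BinSeq α' → BinSeq β →
      xPoint α < xPoint β →
      k * (xPoint β - xPoint α) < |(xPoint α + xPoint β) / 2 - xPoint α'| := by
  refine ⟨1/8, by norm_num, ?_⟩
  rintro α α' β ⟨hα1, Nα, hNα⟩ ⟨hα'1, Nα', hNα'⟩ ⟨hβ1, Nβ, hNβ⟩ hlt
  -- first disagreement index of α and β
  have hP : ∃ m, 1 ≤ m ∧ α m ≠ β m := by
    by_contra hc
    push_neg at hc
    have : xPoint α = xPoint β := by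
      unfold xPoint
      refine tsum_congr fun m => ?_
      by_cases h1 : 1 ≤ m
      · rw [if_pos h1, if_pos h1, hc m h1]
      · rw [if_neg h1, if_neg h1]
    rw [this] at hlt; exact lt_irrefl _ hlt
  classical
  set j := Nat.find hP with hjdef
  obtain ⟨hj1, hjne⟩ : 1 ≤ j ∧ α j ≠ β j := Nat.find_spec hP
  have hmin : ∀ m, m < j → 1 ≤ m → α m = β m := by
    intro m hm h1
    by_contra hne
    exact Nat.find_min hP hm ⟨h1, hne⟩
  set N := max (max Nα (max Nα' Nβ)) (j+1) with hNdef
  have hjN : j + 1 ≤ N := by omega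
  have hjN' : j < N := by omega
  have hvα : ∀ m, N ≤ m → α m = 0 := fun m hm => hNα m (by omega)
  have hvα' : ∀ m, N ≤ m → α' m = 0 := fun m hm => hNα' m (by omega)
  have hvβ : ∀ m, N ≤ m → β m = 0 := fun m hm => hNβ m (by omega)
  -- decompositions at j
  have eα : xPoint α = (∑ m ∈ Finset.range j, FF α m) + FF α j
      + ∑ m ∈ Finset.Ico (j+1) N, FF α m := by
    rw [xPoint_eq_sum α hvα, sum_split _ hjN']
  have eβ0 : xPoint β = (∑ m ∈ Finset.range j, FF β m) + FF β j
      + ∑ m ∈ Finset.Ico (j+1) N, FF β m := by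
    rw [xPoint_eq_sum β hvβ, sum_split _ hjN']
  have hC : ∑ m ∈ Finset.range j, FF β m = ∑ m ∈ Finset.range j, FF α m :=
    Finset.sum_congr rfl fun m hm =>
      FF_congr fun h1 => (hmin m (Finset.mem_range.mp hm) h1).symm
  rw [hC] at eβ0
  -- basic bounds
  have hww : ww j = aa j - aa (j+1) := ww_eq hj1
  have hq : 4 * aa (j+1) ≤ aa j := aa_quarter hj1
  have haj1 : 0 < aa (j+1) := aa_pos _
  have haN : 0 < aa N := aa_pos _
  have hRα0 := tail_nonneg α j N
  have hRβ0 := tail_nonneg β j N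
  have hRα' := tail_nonneg α' j N
  have hRα := tail_le α hα1 hjN
  have hRβ := tail_le β hβ1 hjN
  have hRα'2 := tail_le α' hα'1 hjN
  -- β j = 1 and α j = 0
  have hcases : (α j = 0 ∧ β j = 1) ∨ (α j = 1 ∧ β j = 0) := by
    have := hα1 j; have := hβ1 j; omega
  have hαβj : α j = 0 ∧ β j = 1 := by
    rcases hcases with h | ⟨ha, hb⟩
    · exact h
    · exfalso
      rw [FF_one hj1 ha] at eα
      rw [FF_zero hb] at eβ0
      linarith
  rw [FF_zero hαβj.1] at eα
  rw [FF_one hj1 hαβj.2] at eβ0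
  -- gap bound
  have hd : xPoint β - xPoint α < aa j := by
    have : xPoint β - xPoint α ≤ ww j + (aa (j+1) - aa N) := by linarith
    linarith
  by_cases H : ∃ m, 1 ≤ m ∧ m < j ∧ α' m ≠ α m
  · -- α' disagrees with α below j
    set j' := Nat.find H with hj'def
    obtain ⟨hj'1, hj'j, hj'ne⟩ : 1 ≤ j' ∧ j' < j ∧ α' j' ≠ α j' := Nat.find_spec H
    have hmin' : ∀ m, m < j' → 1 ≤ m → α' m = α m := by
      intro m hm h1
      by_contra hne
      exact Nat.find_min H hm ⟨h1, by omega, hne⟩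
    have hj'N : j' < N := by omega
    have hj'N2 : j' + 1 ≤ N := by omega
    have eα2 : xPoint α = (∑ m ∈ Finset.range j', FF α m) + FF α j'
        + ∑ m ∈ Finset.Ico (j'+1) N, FF α m := by
      rw [xPoint_eq_sum α hvα, sum_split _ hj'N]
    have eα'2 : xPoint α' = (∑ m ∈ Finset.range j', FF α m) + FF α' j'
        + ∑ m ∈ Finset.Ico (j'+1) N, FF α' m := by
      rw [xPoint_eq_sum α' hvα', sum_split _ hj'N]
      congr 1
      congr 1
      exact Finset.sum_congr rfl fun m hm =>
        FF_congr fun h1 => hmin' m (Finset.mem_range.mp hm) h1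
    have hww' : ww j' = aa j' - aa (j'+1) := ww_eq hj'1
    have hq' : 4 * aa (j'+1) ≤ aa j' := aa_quarter hj'1
    have hSα0 := tail_nonneg α j' N
    have hSα'0 := tail_nonneg α' j' N
    have hSα := tail_le α hα1 hj'N2
    have hSα' := tail_le α' hα'1 hj'N2
    have haN' : 0 < aa N := aa_pos _
    have hsep : aa j' / 2 ≤ |xPoint α - xPoint α'| := by
      have hc2 : (α j' = 0 ∧ α' j' = 1) ∨ (α j' = 1 ∧ α' j' = 0) := by
        have := hα1 j'; have := hα'1 j'; omega
      rcases hc2 with ⟨ha, hb⟩ | ⟨ha, hb⟩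
      · rw [FF_zero ha] at eα2
        rw [FF_one hj'1 hb] at eα'2
        have : aa j' / 2 ≤ xPoint α' - xPoint α := by linarith
        calc aa j' / 2 ≤ xPoint α' - xPoint α := this
          _ ≤ |xPoint α' - xPoint α| := le_abs_self _
          _ = |xPoint α - xPoint α'| := abs_sub_comm _ _
      · rw [FF_one hj'1 ha] at eα2
        rw [FF_zero hb] at eα'2
        have : aa j' / 2 ≤ xPoint α - xPoint α' := by linarith
        exact this.trans (le_abs_self _)
    have hmono : aa j ≤ aa (j'+1) := aa_mono (by omega)
    have hMα : |xPoint α - (xPoint α + xPoint β)/2| = (xPoint β - xPoint α)/2 := by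
      rw [abs_sub_comm, abs_of_nonneg (by linarith)]
      ring
    have htri : |xPoint α - xPoint α'| ≤ |xPoint α - (xPoint α + xPoint β)/2|
        + |(xPoint α + xPoint β)/2 - xPoint α'| := abs_sub_le _ _ _
    rw [hMα] at htri
    have haj' : 0 < aa j' := aa_pos _
    linarith
  · -- α' agrees with α below j
    push_neg at H
    have eα' : xPoint α' = (∑ m ∈ Finset.range j, FF α m) + FF α' j
        + ∑ m ∈ Finset.Ico (j+1) N, FF α' m := by
      rw [xPoint_eq_sum α' hvα', sum_split _ hjN']
      congr 1
      congr 1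
      exact Finset.sum_congr rfl fun m hm =>
        FF_congr fun h1 => H m h1 (Finset.mem_range.mp hm)
    have hc2 : α' j = 0 ∨ α' j = 1 := by have := hα'1 j; omega
    rcases hc2 with h0 | h1
    · rw [FF_zero h0] at eα'
      refine lt_of_lt_of_le ?_ (le_abs_self _)
      linarith
    · rw [FF_one hj1 h1] at eα'
      have habs : xPoint α' - (xPoint α + xPoint β)/2
          ≤ |(xPoint α + xPoint β)/2 - xPoint α'| := by
        rw [abs_sub_comm]; exact le_abs_self _
      linarith
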